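/- arXiv:1802.09588 — 2 statements merged into one kernel-verified Lean document; each statement's English description precedes it below -/
import Mathlib

section
/- Let d ≥ 1 and 0 ≤ n < m be integers and let N ≥ n + m be an integer. Then for every θ ∈ ℝ^d, Σ_{θ_k ∈ Θ_N^d} |D_{n,m}^d(θ − θ_k)| ≤ N^d · ( (m+n)/(m−n) )^{d/2}. -/
/-!
Summing the Dirichlet kernels gives the factorisation
`e^{i(m-1)t} ∑_{l=n}^{m-1} D_l(t) = K_{m+n}(e^{it}) K_{m-n}(e^{it})` with
`K_c(w) = 1 + w + ⋯ + w^{c-1}`, so `|D_{n,m}| = |K_{m+n}| |K_{m-n}| / (m - n)`.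
On the grid, `e^{i(θ - 2πk/N)} = z ζ^k` for a primitive `N`-th root of unity `ζ`, and as
`c ≤ N` orthogonality of the characters `k ↦ ζ^{ak}` gives `∑_k |K_c(z ζ^k)|² = c N`.
Cauchy–Schwarz bounds the univariate grid sum by `N √((m+n)/(m-n))`, and the `d`-variate
sum factors into `d` univariate ones.
-/

/-- The uniform sampling grid point in `[0, 2π]^d` indexed by `k ∈ {0,…,N−1}^d`. -/
noncomputable def trigGrid (N : ℕ) {d : ℕ} (k : Fin d → Fin N) : Fin d → ℝ :=
  fun i => 2 * Real.pi * (k i : ℝ) / N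

/-- `p : ℝ^d → ℂ` is a `d`-variate trigonometric polynomial of degree at most `n`. -/
noncomputable def IsTrigPoly (d n : ℕ) (p : (Fin d → ℝ) → ℂ) : Prop :=
  ∃ c : (Fin d → ℤ) → ℂ, ∀ θ : Fin d → ℝ,
    p θ = ∑ k ∈ Fintype.piFinset (fun _ : Fin d => Finset.Icc (-(n : ℤ)) (n : ℤ)),
      c k * Complex.exp (Complex.I * ((∑ i, (k i : ℝ) * θ i : ℝ) : ℂ))

/-- The univariate Dirichlet kernel `D_l(t) = Σ_{k=−l}^{l} exp(i k t)`. -/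
noncomputable def dirichletKer (l : ℕ) (t : ℝ) : ℂ :=
  ∑ k ∈ Finset.Icc (-(l : ℤ)) (l : ℤ), Complex.exp (Complex.I * (k : ℂ) * (t : ℂ))

/-- The univariate de la Vallée-Poussin kernel `D_{n,m}(t) = (1/(m−n)) Σ_{l=n}^{m−1} D_l(t)`. -/
noncomputable def vpKer (n m : ℕ) (t : ℝ) : ℂ :=
  (1 / ((m : ℂ) - (n : ℂ))) * ∑ l ∈ Finset.Ico n m, dirichletKer l t

open Finset Complex

theorem geom_sum_add {R : Type*} [Semiring R] (x : R) (a b : ℕ) :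
    ∑ i ∈ range (a + b), x ^ i = ∑ i ∈ range a, x ^ i + x ^ a * ∑ i ∈ range b, x ^ i := by
  simp only [sum_range_add, pow_add, mul_sum]

theorem sum_Ico_pow_mul_geom_sum_odd {R : Type*} [CommSemiring R] (x : R) {n m : ℕ}
    (hnm : n ≤ m) :
    ∑ l ∈ Ico n m, x ^ (m - 1 - l) * ∑ j ∈ range (2 * l + 1), x ^ j =
      (∑ j ∈ range (m + n), x ^ j) * ∑ j ∈ range (m - n), x ^ j := by
  induction m, hnm using Nat.le_induction with
  | base => simp
  | succ m hnm ih =>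
    have hpow : ∀ l ∈ Ico n m, x ^ (m + 1 - 1 - l) = x * x ^ (m - 1 - l) := fun l hl => by
      rw [← pow_succ']; congr 1; grind
    have hodd : ∑ j ∈ range (2 * m + 1), x ^ j =
        ∑ j ∈ range (m + n + 1), x ^ j + x ^ (m + n + 1) * ∑ j ∈ range (m - n), x ^ j := by
      rw [← geom_sum_add]; congr 2; omega
    rw [sum_Ico_succ_top (by omega), sum_congr rfl fun l hl => by rw [hpow l hl, mul_assoc],
      ← mul_sum, ih, Nat.sub_add_comm hnm, show m + 1 + n = m + n + 1 by omega,
      show m + 1 - 1 - m = 0 by omega, hodd, geom_sum_succ' (n := m + n),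
      geom_sum_succ (n := m - n)]
    ring

theorem pow_mul_dirichletKer (l : ℕ) (t : ℝ) :
    cexp (t * I) ^ l * dirichletKer l t = ∑ j ∈ range (2 * l + 1), cexp (t * I) ^ j := by
  rw [dirichletKer, mul_sum]
  refine sum_nbij' (fun k => (k + l).toNat) (fun j => (j : ℤ) - l) ?_ ?_ ?_ ?_ ?_
  all_goals intro k hk
  all_goals simp only [mem_Icc, mem_range] at hk ⊢
  any_goals omega
  rw [show I * k * t = k * (t * I) by ring, exp_int_mul, ← zpow_natCast,
    ← zpow_add₀ (exp_ne_zero _), ← zpow_natCast, Int.toNat_of_nonneg (by omega), add_comm]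

theorem pow_mul_sum_Ico_dirichletKer {n m : ℕ} (hnm : n ≤ m) (t : ℝ) :
    cexp (t * I) ^ (m - 1) * ∑ l ∈ Ico n m, dirichletKer l t =
      (∑ j ∈ range (m + n), cexp (t * I) ^ j) * ∑ j ∈ range (m - n), cexp (t * I) ^ j := by
  rw [← sum_Ico_pow_mul_geom_sum_odd _ hnm, mul_sum]
  refine sum_congr rfl fun l hl => ?_
  rw [← pow_mul_dirichletKer, ← mul_assoc, ← pow_add]
  congr 3
  grind

theorem norm_vpKer {n m : ℕ} (hnm : n < m) (t : ℝ) :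
    ‖vpKer n m t‖ = ‖∑ j ∈ range (m + n), cexp (t * I) ^ j‖ *
      ‖∑ j ∈ range (m - n), cexp (t * I) ^ j‖ / (m - n) := by
  have hE : ‖cexp (t * I) ^ (m - 1)‖ = 1 := by rw [norm_pow, norm_exp_ofReal_mul_I, one_pow]
  have hmn : ((m : ℂ) - n) = ((m - n : ℕ) : ℂ) := by push_cast [hnm.le]; ring
  rw [vpKer, norm_mul, ← one_mul ‖∑ l ∈ Ico n m, _‖, ← hE, ← norm_mul,
    pow_mul_sum_Ico_dirichletKer hnm.le, norm_mul, hmn, norm_div, norm_one, norm_natCast,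
    Nat.cast_sub hnm.le]
  ring

theorem IsPrimitiveRoot.sum_range_zpow_pow {K : Type*} [Field K] {ζ : K} {N : ℕ}
    (hζ : IsPrimitiveRoot ζ N) (a : ℤ) :
    ∑ k ∈ range N, (ζ ^ a) ^ k = if (N : ℤ) ∣ a then (N : K) else 0 := by
  split_ifs with hdvd
  · simp [(hζ.zpow_eq_one_iff_dvd a).mpr hdvd]
  · have hne : ζ ^ a - 1 ≠ 0 := sub_ne_zero.mpr fun h => hdvd ((hζ.zpow_eq_one_iff_dvd a).mp h)
    have hpow : (ζ ^ a) ^ N = 1 := by rw [← zpow_natCast, ← zpow_mul, mul_comm, zpow_mul,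
      zpow_natCast, hζ.pow_eq_one, one_zpow]
    simpa [hpow, hne] using geom_sum_mul (ζ ^ a) N

theorem sq_norm_geom_sum_of_norm_eq_one {w : ℂ} (hw : ‖w‖ = 1) (c : ℕ) :
    (‖∑ j ∈ range c, w ^ j‖ ^ 2 : ℂ) = ∑ j ∈ range c, ∑ j' ∈ range c, w ^ ((j : ℤ) - j') := by
  have hw0 : w ≠ 0 := norm_ne_zero_iff.mp (by rw [hw]; exact one_ne_zero)
  rw [← mul_conj', map_sum, sum_mul_sum]
  refine sum_congr rfl fun j _ => sum_congr rfl fun j' _ => ?_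
  rw [map_pow, ← inv_eq_conj hw, zpow_sub₀ hw0, zpow_natCast, zpow_natCast, inv_pow, div_eq_mul_inv]

theorem IsPrimitiveRoot.sum_norm_geom_sum_sq {ζ z : ℂ} {N c : ℕ} (hζ : IsPrimitiveRoot ζ N)
    (hz : ‖z‖ = 1) (hc : c ≤ N) :
    ∑ k ∈ range N, ‖∑ j ∈ range c, (z * ζ ^ k) ^ j‖ ^ 2 = c * N := by
  rcases N.eq_zero_or_pos with rfl | hN
  · simp_all
  have hζ1 : ‖ζ‖ = 1 := hζ.norm'_eq_one hN.ne'
  have hzpow : ∀ (k : ℕ) (a : ℤ), (z * ζ ^ k) ^ a = z ^ a * (ζ ^ a) ^ k := fun k a => by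
    rw [mul_zpow, ← zpow_natCast, ← zpow_mul, ← zpow_natCast, ← zpow_mul, mul_comm (k : ℤ)]
  have hdiag : ∀ j ∈ range c, ∀ j' ∈ range c, (N : ℤ) ∣ (j : ℤ) - j' ↔ j = j' := by
    intro j hj j' hj'
    simp only [mem_range] at hj hj'
    refine ⟨fun h => ?_, fun h => by simp [h]⟩
    have := Int.eq_zero_of_abs_lt_dvd h (by rw [abs_lt]; omega)
    omega
  apply Complex.ofReal_injective
  push_cast
  have hsq : ∀ k : ℕ, (‖∑ j ∈ range c, (z * ζ ^ k) ^ j‖ ^ 2 : ℂ) =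
      ∑ j ∈ range c, ∑ j' ∈ range c, z ^ ((j : ℤ) - j') * (ζ ^ ((j : ℤ) - j')) ^ k := fun k => by
    simp only [sq_norm_geom_sum_of_norm_eq_one (w := z * ζ ^ k) (by simp [hz, hζ1]), hzpow]
  simp only [hsq]
  calc ∑ k ∈ range N, ∑ j ∈ range c, ∑ j' ∈ range c, z ^ ((j : ℤ) - j') * (ζ ^ ((j : ℤ) - j')) ^ k
      = ∑ j ∈ range c, ∑ j' ∈ range c,
          z ^ ((j : ℤ) - j') * ∑ k ∈ range N, (ζ ^ ((j : ℤ) - j')) ^ k := by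
        simp only [mul_sum]; rw [sum_comm]; exact sum_congr rfl fun _ _ => sum_comm
    _ = ∑ j ∈ range c, ∑ j' ∈ range c, if j = j' then (N : ℂ) else 0 := by
        refine sum_congr rfl fun j hj => sum_congr rfl fun j' hj' => ?_
        rw [hζ.sum_range_zpow_pow, if_congr (hdiag j hj j' hj') rfl rfl]
        split_ifs with h <;> simp [h]
    _ = ∑ j ∈ range c, (N : ℂ) := sum_congr rfl fun j hj => by rw [sum_ite_eq, if_pos hj]
    _ = c * N := by simp

theorem sum_norm_vpKer_grid_le {n m N : ℕ} (hnm : n < m) (hN : n + m ≤ N) (x : ℝ) :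
    ∑ k : Fin N, ‖vpKer n m (x - 2 * Real.pi * k / N)‖ ≤
      N * √(((m : ℝ) + n) / ((m : ℝ) - n)) := by
  have hN0 : N ≠ 0 := by omega
  set ζ := (cexp (2 * Real.pi * I / N))⁻¹ with hζ_def
  have hζ : IsPrimitiveRoot ζ N := (isPrimitiveRoot_exp N hN0).inv
  set z := cexp (x * I) with hz_def
  have hgrid : ∀ k : ℕ, cexp (((x - 2 * Real.pi * k / N : ℝ) : ℂ) * I) = z * ζ ^ k := fun k => by
    rw [hζ_def, hz_def, ← exp_neg, ← exp_nat_mul, ← exp_add]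
    congr 1
    push_cast
    ring
  set F : ℕ → ℕ → ℝ := fun c k => ‖∑ j ∈ range c, (z * ζ ^ k) ^ j‖
  have hmn : (0 : ℝ) < m - n := sub_pos.mpr (Nat.cast_lt.mpr hnm)
  calc ∑ k : Fin N, ‖vpKer n m (x - 2 * Real.pi * k / N)‖
      = (∑ k ∈ range N, F (m + n) k * F (m - n) k) / (m - n) := by
        rw [Fin.sum_univ_eq_sum_range (fun k => ‖vpKer n m (x - 2 * Real.pi * k / N)‖), sum_div]
        exact sum_congr rfl fun k _ => by rw [norm_vpKer hnm, hgrid]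
    _ ≤ √(∑ k ∈ range N, F (m + n) k ^ 2) * √(∑ k ∈ range N, F (m - n) k ^ 2) / (m - n) := by
        gcongr
        exact Real.sum_mul_le_sqrt_mul_sqrt _ _ _
    _ = √((m + n) * N) * √((m - n) * N) / (m - n) := by
        rw [hζ.sum_norm_geom_sum_sq (norm_exp_ofReal_mul_I x) (by omega),
          hζ.sum_norm_geom_sum_sq (norm_exp_ofReal_mul_I x) (by omega), Nat.cast_sub hnm.le]
        push_cast
        rfl
    _ = N * √(((m : ℝ) + n) / ((m : ℝ) - n)) := by
        rw [← Real.sqrt_mul (by positivity), show ((m : ℝ) + n) * N * ((m - n) * N) =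
          (N * (m - n)) ^ 2 * ((m + n) / (m - n)) by field_simp,
          Real.sqrt_mul (by positivity), Real.sqrt_sq (by positivity)]
        field_simp

theorem stmt7_general (d n m N : ℕ) (hm : n < m) (hN : n + m ≤ N) :
    ∀ θ : Fin d → ℝ,
      ∑ k : Fin d → Fin N, ‖∏ i, vpKer n m (θ i - trigGrid N k i)‖ ≤
        (N : ℝ) ^ d * (((m : ℝ) + n) / ((m : ℝ) - n)) ^ ((d : ℝ) / 2) := by
  intro θ
  have hr : 0 ≤ ((m : ℝ) + n) / ((m : ℝ) - n) :=
    div_nonneg (by positivity) (sub_nonneg.mpr (Nat.cast_le.mpr hm.le))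
  calc ∑ k : Fin d → Fin N, ‖∏ i, vpKer n m (θ i - trigGrid N k i)‖
      = ∏ i, ∑ j : Fin N, ‖vpKer n m (θ i - 2 * Real.pi * j / N)‖ := by
        simp only [norm_prod, trigGrid]
        exact (Fintype.prod_sum fun i (j : Fin N) => ‖vpKer n m (θ i - 2 * Real.pi * j / N)‖).symm
    _ ≤ ∏ _i : Fin d, N * √(((m : ℝ) + n) / ((m : ℝ) - n)) :=
        prod_le_prod (fun _ _ => sum_nonneg fun _ _ => norm_nonneg _)
          fun i _ => sum_norm_vpKer_grid_le hm hN (θ i)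
    _ = (N : ℝ) ^ d * (((m : ℝ) + n) / ((m : ℝ) - n)) ^ ((d : ℝ) / 2) := by
        rw [prod_const, card_univ, Fintype.card_fin, mul_pow, Real.sqrt_eq_rpow,
          ← Real.rpow_mul_natCast hr, one_div_mul_eq_div]

theorem stmt7 (d n m N : ℕ) (hd : 1 ≤ d) (hm : n < m) (hN : n + m ≤ N) :
    ∀ θ : Fin d → ℝ,
      ∑ k : Fin d → Fin N, ‖∏ i, vpKer n m (θ i - trigGrid N k i)‖ ≤
        (N : ℝ) ^ d * (((m : ℝ) + n) / ((m : ℝ) - n)) ^ ((d : ℝ) / 2) :=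
  stmt7_general d n m N hm hN
end

section
/- Let d ≥ 1, n ≥ 1 and N ≥ 2n+1 be integers, let p be a real d-variate trigonometric polynomial of degree at most n, set α = 2n/N, and set A = max_{θ_k ∈ Θ_N^d} p(θ_k) and B = min_{θ_k ∈ Θ_N^d} p(θ_k). Then for every θ ∈ ℝ^d, p(θ) ≤ (1/2) ( A + B + (1 − α)^{−d/2} (A − B) ). -/
open Complex Finset
open scoped Real ComplexConjugate

noncomputable def expI (x : ℝ) : ℂ := exp (I * x)

lemma expI_add (x y : ℝ) : expI (x + y) = expI x * expI y := by
  simp only [expI, ofReal_add, mul_add, exp_add]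

lemma expI_zero : expI 0 = 1 := by simp [expI]

lemma expI_natCast_mul (k : ℕ) (x : ℝ) : expI (k * x) = expI x ^ k := by
  rw [expI, expI, ← exp_nat_mul]; push_cast; ring_nf

lemma expI_eq_cos_add_sin (x : ℝ) : expI x = Real.cos x + Real.sin x * I := by
  rw [expI, mul_comm, exp_mul_I, ← ofReal_cos, ← ofReal_sin]

lemma conj_expI (x : ℝ) : conj (expI x) = expI (-x) := by
  rw [expI, expI, ← exp_conj]; simp

lemma normSq_expI (x : ℝ) : normSq (expI x) = 1 := by
  rw [expI_eq_cos_add_sin, normSq_add_mul_I, Real.cos_sq_add_sin_sq]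

lemma normSq_expI_sub_one (x : ℝ) : normSq (expI x - 1) = 2 - 2 * Real.cos x := by
  rw [expI_eq_cos_add_sin, add_sub_right_comm, ← ofReal_one, ← ofReal_sub, normSq_add_mul_I]
  nlinarith [Real.sin_sq_add_cos_sq x]

lemma exp_I_mul_ofReal_sum {ι : Type*} (s : Finset ι) (f : ι → ℝ) :
    exp (I * ↑(∑ i ∈ s, f i)) = ∏ i ∈ s, expI (f i) := by
  rw [ofReal_sum, mul_sum, exp_sum]; rfl

lemma sum_grid_expI {N : ℕ} (hN : N ≠ 0) (r : ℤ) :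
    ∑ a : Fin N, expI (r * (2 * π * a / N)) = if (N : ℤ) ∣ r then (N : ℂ) else 0 := by
  have hζ := isPrimitiveRoot_exp N hN
  set ζ := exp (2 * π * I / N)
  have hpow (a : ℕ) : expI (r * (2 * π * a / N)) = (ζ ^ r) ^ a := by
    rw [← zpow_natCast, ← zpow_mul, ← exp_int_mul, expI]
    push_cast; ring_nf
  simp only [hpow]
  rw [Fin.sum_univ_eq_sum_range (fun a => (ζ ^ r) ^ a)]
  split_ifs with hr
  · simp [(hζ.zpow_eq_one_iff_dvd r).2 hr]
  · have hne : ζ ^ r - 1 ≠ 0 := sub_ne_zero.2 fun h => hr ((hζ.zpow_eq_one_iff_dvd r).1 h)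
    apply mul_right_cancel₀ hne
    rw [geom_sum_mul, ← zpow_natCast, ← zpow_mul, mul_comm, zpow_mul, zpow_natCast,
      hζ.pow_eq_one, one_zpow, sub_self, zero_mul]

lemma dirichletKer_eq_sum_expI (l : ℕ) (t : ℝ) :
    dirichletKer l t = ∑ r ∈ Icc (-(l : ℤ)) l, expI (r * t) := by
  simp only [dirichletKer, expI, ofReal_mul, ofReal_intCast, mul_assoc]

lemma sum_grid_expI_mul_dirichletKer {N l : ℕ} {k : ℤ} (hkl : |k| ≤ l) (hlN : l + |k| < N)
    (t : ℝ) :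
    ∑ a : Fin N, expI (k * (2 * π * a / N)) * dirichletKer l (t - 2 * π * a / N) =
      N * expI (k * t) := by
  have hN : N ≠ 0 := by have := abs_nonneg k; omega
  have hsplit (a : Fin N) (r : ℤ) : expI (k * (2 * π * a / N)) * expI (r * (t - 2 * π * a / N)) =
      expI (r * t) * expI ((k - r : ℤ) * (2 * π * a / N)) := by
    rw [← expI_add, ← expI_add]; push_cast; ring_nf
  have hdiag (r : ℤ) (hr : r ∈ Icc (-(l : ℤ)) l) :
      expI (r * t) * (if (N : ℤ) ∣ k - r then (N : ℂ) else 0) =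
        if k = r then N * expI (k * t) else 0 := by
    rw [mem_Icc] at hr
    by_cases hkr : k = r
    · simp [hkr, mul_comm]
    · have hlt : |k - r| < N := by have := abs_sub k r; have := abs_le.2 hr; omega
      have hndvd : ¬ (N : ℤ) ∣ k - r := fun h =>
        (Int.le_of_dvd (abs_pos.2 (sub_ne_zero.2 hkr)) ((dvd_abs _ _).2 h)).not_gt hlt
      simp [hkr, hndvd]
  simp_rw [dirichletKer_eq_sum_expI, mul_sum, hsplit]
  rw [sum_comm]
  simp_rw [← mul_sum, sum_grid_expI hN]
  rw [sum_congr rfl hdiag, sum_ite_eq, if_pos (mem_Icc.2 (abs_le.1 hkl))]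

lemma dirichletKer_eq_one_add_sum_cos (l : ℕ) (t : ℝ) :
    dirichletKer l t = ((1 + 2 * ∑ j ∈ range l, Real.cos ((j + 1) * t) : ℝ) : ℂ) := by
  induction l with
  | zero => simp [dirichletKer_eq_sum_expI, expI_zero]
  | succ l ih =>
    have hIcc : Icc (-((l + 1 : ℕ) : ℤ)) (l + 1 : ℕ) =
        insert (-((l + 1 : ℕ) : ℤ)) (insert ((l + 1 : ℕ) : ℤ) (Icc (-(l : ℤ)) l)) := by
      ext r; simp only [mem_Icc, mem_insert]; omega
    have hcos : expI (-((l + 1 : ℕ) * t)) + expI ((l + 1 : ℕ) * t) =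
        2 * Real.cos ((l + 1) * t) := by
      simp only [expI_eq_cos_add_sin, Real.cos_neg, Real.sin_neg]; push_cast; ring
    rw [dirichletKer_eq_sum_expI, hIcc, sum_insert (by simp; omega), sum_insert (by simp),
      ← dirichletKer_eq_sum_expI, ih, sum_range_succ]
    push_cast at hcos ⊢
    simp only [neg_mul] at hcos ⊢
    linear_combination hcos

/-- `L` times the Fejér kernel of order `L`. -/
noncomputable def fejerKer (L : ℕ) (s : ℝ) : ℝ := normSq (∑ j ∈ range L, expI (j * s))

lemma fejerKer_succ (L : ℕ) (s : ℝ) :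
    fejerKer (L + 1) s = fejerKer L s + (1 + 2 * ∑ j ∈ range L, Real.cos ((j + 1) * s)) := by
  have hcross : (∑ j ∈ range L, expI (j * s) * conj (expI (L * s))).re =
      ∑ j ∈ range L, Real.cos ((j + 1) * s) := by
    rw [re_sum, ← sum_range_reflect]
    refine sum_congr rfl fun j hj => ?_
    have hj' : ((L - 1 - j : ℕ) : ℝ) = L - 1 - j := by
      rw [Nat.sub_sub, Nat.cast_sub (by simp at hj; omega)]; push_cast; ring
    rw [conj_expI, ← expI_add, expI_eq_cos_add_sin, add_re, ofReal_re, re_ofReal_mul, I_re,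
      mul_zero, add_zero, ← Real.cos_neg, hj']
    ring_nf
  rw [fejerKer, fejerKer, sum_range_succ, normSq_add, normSq_expI, sum_mul, hcross]
  ring

lemma sum_range_dirichletKer (L : ℕ) (s : ℝ) :
    ∑ l ∈ range L, dirichletKer l s = fejerKer L s := by
  induction L with
  | zero => simp [fejerKer]
  | succ L ih =>
    rw [sum_range_succ, ih, dirichletKer_eq_one_add_sum_cos, fejerKer_succ]
    push_cast; ring

lemma fejerKer_nonneg (L : ℕ) (s : ℝ) : 0 ≤ fejerKer L s := normSq_nonneg _

lemma fejerKer_mul_two_sub_two_cos (L : ℕ) (s : ℝ) :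
    fejerKer L s * (2 - 2 * Real.cos s) = 2 - 2 * Real.cos (L * s) := by
  rw [fejerKer, ← normSq_expI_sub_one, ← normSq_expI_sub_one, ← normSq_mul]
  simp_rw [expI_natCast_mul]
  rw [geom_sum_mul]

lemma fejerKer_of_cos_eq_one {s : ℝ} (hs : Real.cos s = 1) (L : ℕ) : fejerKer L s = L ^ 2 := by
  have hsin : Real.sin s = 0 := by nlinarith [Real.sin_sq_add_cos_sq s]
  have h1 : expI s = 1 := by simp [expI_eq_cos_add_sin, hs, hsin]
  simp_rw [fejerKer, expI_natCast_mul, h1, one_pow, sum_const, card_range, nsmul_one,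
    ← ofReal_natCast, normSq_ofReal, sq]

lemma one_sub_cos_mul_one_sub_cos (p q : ℝ) :
    (1 - Real.cos (2 * p)) * (1 - Real.cos (2 * q)) =
      (Real.cos (p - q) - Real.cos (p + q)) ^ 2 := by
  rw [Real.cos_two_mul, Real.cos_two_mul, Real.cos_sub, Real.cos_add]
  nlinarith [Real.sin_sq_add_cos_sq p, Real.sin_sq_add_cos_sq q]

lemma sq_fejerKer_sub_fejerKer {m n : ℕ} (h : n ≤ m) (s : ℝ) :
    (fejerKer m s - fejerKer n s) ^ 2 = fejerKer (m + n) s * fejerKer (m - n) s := by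
  by_cases hs : Real.cos s = 1
  · simp only [fejerKer_of_cos_eq_one hs, Nat.cast_sub h]
    push_cast; ring
  have hE : 2 - 2 * Real.cos s ≠ 0 := fun h => hs (by linarith)
  apply mul_right_cancel₀ (pow_ne_zero 2 hE)
  -- `n s` and `m s` are `p ∓ q` for `p = (m + n) s / 2`, `q = (m - n) s / 2`
  have key := one_sub_cos_mul_one_sub_cos ((m + n) * s / 2) ((m - n) * s / 2)
  calc (fejerKer m s - fejerKer n s) ^ 2 * (2 - 2 * Real.cos s) ^ 2
      = (fejerKer m s * (2 - 2 * Real.cos s) - fejerKer n s * (2 - 2 * Real.cos s)) ^ 2 := by ring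
    _ = (fejerKer (m + n) s * (2 - 2 * Real.cos s)) *
          (fejerKer (m - n) s * (2 - 2 * Real.cos s)) := by
        simp only [fejerKer_mul_two_sub_two_cos, Nat.cast_sub h]
        push_cast
        ring_nf at key ⊢
        linear_combination (-4) * key
    _ = fejerKer (m + n) s * fejerKer (m - n) s * (2 - 2 * Real.cos s) ^ 2 := by ring

lemma vpKer_eq_fejerKer_sub {n m : ℕ} (h : n ≤ m) (s : ℝ) :
    vpKer n m s = ((fejerKer m s - fejerKer n s) / (m - n) : ℝ) := by
  rw [vpKer, sum_Ico_eq_sub _ h, sum_range_dirichletKer, sum_range_dirichletKer]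
  push_cast; ring

lemma norm_vpKer_s9 {n m : ℕ} (h : n ≤ m) (s : ℝ) :
    ‖vpKer n m s‖ = √(fejerKer (m + n) s) * √(fejerKer (m - n) s) / (m - n) := by
  have hmn : (0 : ℝ) ≤ m - n := sub_nonneg.2 (Nat.cast_le.2 h)
  rw [vpKer_eq_fejerKer_sub h, norm_real, Real.norm_eq_abs, abs_div, abs_of_nonneg hmn,
    ← Real.sqrt_mul (fejerKer_nonneg _ _), ← sq_fejerKer_sub_fejerKer h, Real.sqrt_sq_eq_abs]

lemma sum_grid_expI_mul_vpKer {N n m : ℕ} {k : ℤ} (hnm : n < m) (hmN : m + n ≤ N)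
    (hk : |k| ≤ n) (t : ℝ) :
    ∑ a : Fin N, expI (k * (2 * π * a / N)) * vpKer n m (t - 2 * π * a / N) =
      N * expI (k * t) := by
  have hl (l : ℕ) (hl : l ∈ Ico n m) :
      ∑ a : Fin N, expI (k * (2 * π * a / N)) * dirichletKer l (t - 2 * π * a / N) =
        N * expI (k * t) := by
    rw [mem_Ico] at hl
    exact sum_grid_expI_mul_dirichletKer (hk.trans (by exact_mod_cast hl.1)) (by omega) t
  have hmn : (m : ℂ) - n ≠ 0 := sub_ne_zero.2 (by exact_mod_cast hnm.ne')
  simp_rw [vpKer, mul_left_comm _ (1 / _ : ℂ), mul_sum]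
  rw [sum_comm]
  simp_rw [← mul_sum]
  rw [sum_congr rfl hl, sum_const, Nat.card_Ico, nsmul_eq_mul, Nat.cast_sub hnm.le]
  field_simp

lemma sum_grid_fejerKer {N L : ℕ} (hL : L ≤ N) (t : ℝ) :
    ∑ a : Fin N, fejerKer L (t - 2 * π * a / N) = N * L := by
  have hl (l : ℕ) (hl : l ∈ range L) :
      ∑ a : Fin N, dirichletKer l (t - 2 * π * a / N) = N := by
    rw [mem_range] at hl
    simpa [expI_zero] using sum_grid_expI_mul_dirichletKer (k := 0) (N := N) (l := l)
      (by simp) (by simp; omega) t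
  apply ofReal_injective
  push_cast
  simp_rw [← sum_range_dirichletKer]
  rw [sum_comm, sum_congr rfl hl]
  simp [mul_comm]

lemma sum_grid_norm_vpKer_le {N n m : ℕ} (hnm : n < m) (hmN : m + n ≤ N) (t : ℝ) :
    ∑ a : Fin N, ‖vpKer n m (t - 2 * π * a / N)‖ ≤ N * √((m + n) / (m - n)) := by
  have hmn : (0 : ℝ) < m - n := sub_pos.2 (by exact_mod_cast hnm)
  have hsum_mn : ∑ a : Fin N, fejerKer (m + n) (t - 2 * π * a / N) = N * (m + n) := by
    rw [sum_grid_fejerKer hmN]; push_cast; ring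
  have hsum_sub : ∑ a : Fin N, fejerKer (m - n) (t - 2 * π * a / N) = N * (m - n) := by
    rw [sum_grid_fejerKer (by omega), Nat.cast_sub hnm.le]
  have hsimp : √(N * (m + n)) * √(N * (m - n)) = N * √((m + n) / (m - n)) * (m - n) := by
    rw [← Real.sqrt_mul (by positivity),
      show (N : ℝ) * (m + n) * (N * (m - n)) = (N * (m - n)) ^ 2 * ((m + n) / (m - n)) by
        field_simp,
      Real.sqrt_mul (sq_nonneg _), Real.sqrt_sq (by positivity)]
    ring
  simp_rw [norm_vpKer_s9 hnm.le, ← sum_div]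
  rw [div_le_iff₀ hmn, ← hsimp, ← hsum_mn, ← hsum_sub]
  exact Real.sum_sqrt_mul_sqrt_le _ (fun _ => fejerKer_nonneg _ _) (fun _ => fejerKer_nonneg _ _)

lemma sum_grid_expI_mul_vpKer_div {N n : ℕ} {k : ℤ} (hN : 2 * n + 1 ≤ N) (hk : |k| ≤ n)
    (t : ℝ) :
    ∑ a : Fin N, expI (k * (2 * π * a / N)) * (vpKer n (N - n) (t - 2 * π * a / N) / N) =
      expI (k * t) := by
  have hN0 : (N : ℂ) ≠ 0 := by norm_cast; omega
  calc ∑ a : Fin N, expI (k * (2 * π * a / N)) * (vpKer n (N - n) (t - 2 * π * a / N) / N)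
      = (∑ a : Fin N, expI (k * (2 * π * a / N)) * vpKer n (N - n) (t - 2 * π * a / N)) / N := by
        simp only [sum_div, mul_div_assoc]
    _ = expI (k * t) := by
        rw [sum_grid_expI_mul_vpKer (by omega) (by omega) hk t, mul_div_cancel_left₀ _ hN0]

lemma sum_grid_vpKer_div {N n : ℕ} (hN : 2 * n + 1 ≤ N) (t : ℝ) :
    ∑ a : Fin N, vpKer n (N - n) (t - 2 * π * a / N) / N = 1 := by
  simpa [expI_zero] using sum_grid_expI_mul_vpKer_div (k := 0) hN (by simp) t

lemma sum_grid_norm_vpKer_div_le {N n : ℕ} (hN : 2 * n + 1 ≤ N) (t : ℝ) :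
    ∑ a : Fin N, ‖vpKer n (N - n) (t - 2 * π * a / N) / N‖ ≤ √(1 - 2 * n / N)⁻¹ := by
  have hN0 : (N : ℝ) ≠ 0 := by norm_cast; omega
  have hratio : ((N - n : ℕ) + n : ℝ) / ((N - n : ℕ) - n) = (1 - 2 * n / N : ℝ)⁻¹ := by
    rw [Nat.cast_sub (by omega)]; field_simp; ring
  simp only [norm_div, Complex.norm_natCast]
  rw [← sum_div, ← hratio, div_le_iff₀ (by positivity)]
  exact (sum_grid_norm_vpKer_le (by omega) (by omega) t).trans_eq (mul_comm _ _)

lemma IsTrigPoly.eq_sum_grid_mul_prod {d n : ℕ} {M : Type*} [Fintype M]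
    {p : (Fin d → ℝ) → ℂ} (hp : IsTrigPoly d n p) (x : M → ℝ) (φ : ℝ → M → ℂ)
    (hφ : ∀ k : ℤ, |k| ≤ n → ∀ t, ∑ a, expI (k * x a) * φ t a = expI (k * t)) (θ : Fin d → ℝ) :
    p θ = ∑ j : Fin d → M, p (fun i => x (j i)) * ∏ i, φ (θ i) (j i) := by
  obtain ⟨c, hc⟩ := hp
  have hmode (k : Fin d → ℤ) (hk : k ∈ Fintype.piFinset fun _ => Icc (-(n : ℤ)) n) :
      exp (I * ↑(∑ i, k i * θ i)) =
        ∑ j : Fin d → M, exp (I * ↑(∑ i, k i * x (j i))) * ∏ i, φ (θ i) (j i) := by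
    have hk' (i : Fin d) : |k i| ≤ n := abs_le.2 (mem_Icc.1 (Fintype.mem_piFinset.1 hk i))
    calc exp (I * ↑(∑ i, k i * θ i))
        = ∏ i, ∑ a, expI (k i * x a) * φ (θ i) a := by
          rw [exp_I_mul_ofReal_sum]; exact prod_congr rfl fun i _ => (hφ _ (hk' i) _).symm
      _ = ∑ j : Fin d → M, ∏ i, expI (k i * x (j i)) * φ (θ i) (j i) := Fintype.prod_sum _
      _ = _ := by simp_rw [prod_mul_distrib, exp_I_mul_ofReal_sum]
  rw [hc θ, sum_congr rfl fun k hk => by rw [hmode k hk]]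
  simp_rw [hc, mul_sum, sum_mul, mul_assoc]
  exact sum_comm

lemma abs_sub_le_mul_sum_norm {ι : Type*} [Fintype ι] {y c r : ℝ} {v : ι → ℝ} {w : ι → ℂ}
    (hy : (y : ℂ) = ∑ i, v i * w i) (hw : ∑ i, w i = 1) (hv : ∀ i, |v i - c| ≤ r) :
    |y - c| ≤ r * ∑ i, ‖w i‖ := by
  have hyc : ((y - c : ℝ) : ℂ) = ∑ i, ((v i - c : ℝ) : ℂ) * w i := by
    push_cast
    simp_rw [sub_mul, sum_sub_distrib, ← mul_sum, hw, hy, mul_one]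
  calc |y - c| = ‖((y - c : ℝ) : ℂ)‖ := (norm_real _).symm
    _ ≤ ∑ i, ‖((v i - c : ℝ) : ℂ) * w i‖ := hyc ▸ norm_sum_le _ _
    _ = ∑ i, |v i - c| * ‖w i‖ := by simp_rw [norm_mul, norm_real, Real.norm_eq_abs]
    _ ≤ ∑ i, r * ‖w i‖ := sum_le_sum fun i _ => mul_le_mul_of_nonneg_right (hv i) (norm_nonneg _)
    _ = r * ∑ i, ‖w i‖ := (mul_sum _ _ _).symm

lemma sum_norm_prod_le_pow {ι M : Type*} [Fintype ι] [DecidableEq ι] [Fintype M]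
    (φ : ι → M → ℂ) {K : ℝ} (hK : ∀ i, ∑ a, ‖φ i a‖ ≤ K) :
    ∑ j : ι → M, ‖∏ i, φ i (j i)‖ ≤ K ^ Fintype.card ι := by
  simp_rw [norm_prod]
  rw [← Fintype.prod_sum fun i a => ‖φ i a‖, ← card_univ, ← prod_const]
  exact prod_le_prod (fun i _ => sum_nonneg fun a _ => norm_nonneg _) fun i _ => hK i

lemma sqrt_inv_pow {x : ℝ} (hx : 0 ≤ x) (d : ℕ) : √x⁻¹ ^ d = x ^ (-(d : ℝ) / 2) := by
  rw [Real.sqrt_eq_rpow, ← Real.rpow_natCast, ← Real.rpow_mul (inv_nonneg.2 hx),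
    Real.inv_rpow hx, ← Real.rpow_neg hx]
  ring_nf

theorem stmt9_general (d n N : ℕ) (hN : 2 * n + 1 ≤ N)
    (p : (Fin d → ℝ) → ℝ) (hp : IsTrigPoly d n (fun θ => (p θ : ℂ)))
    (α : ℝ) (hα : α = 2 * n / N) (A B : ℝ)
    (hA : IsGreatest (Set.range fun k : Fin d → Fin N => p (trigGrid N k)) A)
    (hB : IsLeast (Set.range fun k : Fin d → Fin N => p (trigGrid N k)) B) :
    ∀ θ : Fin d → ℝ, p θ ≤ (1 / 2) * (A + B + (1 - α) ^ (-(d : ℝ) / 2) * (A - B)) := by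
  intro θ
  set w : (Fin d → Fin N) → ℂ := fun j => ∏ i, vpKer n (N - n) (θ i - 2 * π * (j i) / N) / N
  have hrepr : (p θ : ℂ) = ∑ j, (p (trigGrid N j) : ℂ) * w j :=
    hp.eq_sum_grid_mul_prod _ _ (fun _ hk t => sum_grid_expI_mul_vpKer_div hN hk t) θ
  have hw : ∑ j, w j = 1 := by
    simp only [w]
    rw [← Fintype.prod_sum fun i (a : Fin N) => vpKer n (N - n) (θ i - 2 * π * a / N) / N]
    simp only [sum_grid_vpKer_div hN, prod_const_one]
  have hdev := abs_sub_le_mul_sum_norm hrepr hw (c := (A + B) / 2) (r := (A - B) / 2)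
    fun j => abs_le.2 ⟨by linarith [hB.2 ⟨j, rfl⟩], by linarith [hA.2 ⟨j, rfl⟩]⟩
  have hα1 : 0 ≤ 1 - α := by
    rw [hα, sub_nonneg, div_le_one (by exact_mod_cast (by omega : 0 < N))]
    exact_mod_cast (by omega : 2 * n ≤ N)
  have hL1 : ∑ j, ‖w j‖ ≤ (1 - α) ^ (-(d : ℝ) / 2) := by
    have := sum_norm_prod_le_pow _ fun i => sum_grid_norm_vpKer_div_le hN (θ i)
    rwa [Fintype.card_fin, ← hα, sqrt_inv_pow hα1] at this
  have hBA : B ≤ A := hA.2 hB.1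
  nlinarith [le_abs_self (p θ - (A + B) / 2),
    mul_le_mul_of_nonneg_left hL1 (by linarith : 0 ≤ (A - B) / 2)]

theorem stmt9 (d n N : ℕ) (hd : 1 ≤ d) (hn : 1 ≤ n) (hN : 2 * n + 1 ≤ N)
    (p : (Fin d → ℝ) → ℝ) (hp : IsTrigPoly d n (fun θ => (p θ : ℂ)))
    (α : ℝ) (hα : α = 2 * n / N) (A B : ℝ)
    (hA : IsGreatest (Set.range fun k : Fin d → Fin N => p (trigGrid N k)) A)
    (hB : IsLeast (Set.range fun k : Fin d → Fin N => p (trigGrid N k)) B) :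
    ∀ θ : Fin d → ℝ, p θ ≤ (1 / 2) * (A + B + (1 - α) ^ (-(d : ℝ) / 2) * (A - B)) :=
  stmt9_general d n N hN p hp α hα A B hA hB
end
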